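/- Let Γ be a subgroup of A₄ × A₄ of order 6 and let Υ be a subgroup of A₄ × A₄ of order 12 with Γ ≤ Υ. Then Υ is isomorphic to (ℤ/2) × (ℤ/2) × (ℤ/3) and is of product type, i.e. Υ equals the product subgroup π₁(Υ) × π₂(Υ) of its projections. -/

import Mathlib

/-- The alternating group `A₄` on four letters. -/
abbrev A4 : Type := alternatingGroup (Fin 4)

private lemma A4_two_or_three : ∀ a : A4, a ^ 2 = 1 ∨ a ^ 3 = 1 := by decide

private lemma A4_sq_comm : ∀ a b : A4, a ^ 2 = 1 → b ^ 2 = 1 → a * b = b * a := by decide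

private lemma A4_conj_inv : ∀ a b : A4, a ^ 3 = 1 → b * a * b⁻¹ = a⁻¹ → a = 1 := by decide

private lemma A4_card : Nat.card A4 = 12 := by
  rw [Nat.card_eq_fintype_card]; decide

private lemma G_pow_six (x : A4 × A4) : x ^ 6 = 1 := by
  have h : ∀ a : A4, a ^ 6 = 1 := by
    intro a
    rcases A4_two_or_three a with h | h
    · rw [show (6 : ℕ) = 2 * 3 from rfl, pow_mul, h, one_pow]
    · rw [show (6 : ℕ) = 3 * 2 from rfl, pow_mul, h, one_pow]
  rw [Prod.ext_iff]
  simp only [Prod.pow_fst, Prod.pow_snd, Prod.fst_one, Prod.snd_one]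
  exact ⟨h x.1, h x.2⟩

private lemma G_conj_inv : ∀ x y : A4 × A4, x ^ 3 = 1 → y * x * y⁻¹ = x⁻¹ → x = 1 := by
  rintro ⟨a₁, a₂⟩ ⟨b₁, b₂⟩ h3 hc
  rw [Prod.ext_iff] at h3 hc ⊢
  simp only [Prod.pow_fst, Prod.pow_snd, Prod.fst_one, Prod.snd_one, Prod.fst_mul, Prod.snd_mul,
    Prod.fst_inv, Prod.snd_inv] at h3 hc ⊢
  exact ⟨A4_conj_inv a₁ b₁ h3.1 hc.1, A4_conj_inv a₂ b₂ h3.2 hc.2⟩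

private lemma G_sq_comm : ∀ x y : A4 × A4, x ^ 2 = 1 → y ^ 2 = 1 → x * y = y * x := by
  rintro ⟨a₁, a₂⟩ ⟨b₁, b₂⟩ hx hy
  rw [Prod.ext_iff] at hx hy ⊢
  simp only [Prod.pow_fst, Prod.pow_snd, Prod.fst_one, Prod.snd_one, Prod.fst_mul,
    Prod.snd_mul] at hx hy ⊢
  exact ⟨A4_sq_comm a₁ b₁ hx.1 hy.1, A4_sq_comm a₂ b₂ hx.2 hy.2⟩

private lemma sub_conj_inv (H : Subgroup (A4 × A4)) (x y : H) (h3 : x ^ 3 = 1)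
    (hc : y * x * y⁻¹ = x⁻¹) : x = 1 := by
  have := G_conj_inv x y (by exact_mod_cast congrArg Subtype.val h3)
    (by exact_mod_cast congrArg Subtype.val hc)
  exact Subtype.ext this

private lemma conj_fix {H : Type*} [Group H]
    (hF : ∀ x y : H, x ^ 3 = 1 → y * x * y⁻¹ = x⁻¹ → x = 1)
    {g h : H} (hg : orderOf g = 3) (hmem : h * g * h⁻¹ ∈ Subgroup.zpowers g) :
    h * g * h⁻¹ = g := by
  obtain ⟨k, hk⟩ := hmem
  have h3 : g ^ (3 : ℕ) = 1 := by rw [← hg]; exact pow_orderOf_eq_one g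
  have hk3 : g ^ (k % 3) = h * g * h⁻¹ := by
    rw [← hk]
    show g ^ (k % 3) = g ^ k
    conv_rhs => rw [← zpow_mod_orderOf]
    rw [hg]
    norm_num
  have hne : g ≠ 1 := by
    intro h1; rw [h1, orderOf_one] at hg; norm_num at hg
  have hkr : k % 3 = 0 ∨ k % 3 = 1 ∨ k % 3 = 2 := by omega
  rcases hkr with h0 | h1 | h2
  · rw [h0, zpow_zero] at hk3
    exfalso
    apply hne
    have : h⁻¹ * (h * g * h⁻¹) * h = h⁻¹ * 1 * h := by rw [← hk3]
    group at this
    rw [this]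
  · rw [h1, zpow_one] at hk3; exact hk3.symm
  · exfalso
    apply hne
    have hg2 : g ^ (2 : ℤ) = g⁻¹ := by
      have : g ^ (2 : ℤ) * g = 1 := by
        rw [show g ^ (2 : ℤ) * g = g ^ (3 : ℕ) by group, h3]
      exact eq_inv_of_mul_eq_one_left this
    rw [h2, hg2] at hk3
    exact hF g h h3 hk3.symm

private lemma sylow_normal {H : Type*} [Group H] {p : ℕ} [Fact p.Prime]
    (hs : Subsingleton (Sylow p H)) (P : Sylow p H) : (P : Subgroup H).Normal := by
  rw [← Subgroup.normalizer_eq_top_iff, eq_top_iff]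
  intro a _
  exact Sylow.smul_eq_iff_mem_normalizer.mp (Subsingleton.elim _ _)

private lemma no_six (P : Subgroup A4) (hc : ∀ a b : ↥P, Commute a b) :
    ¬ (6 ∣ Nat.card P) := by
  intro h6
  haveI : Fact (Nat.Prime 2) := ⟨Nat.prime_two⟩
  haveI : Fact (Nat.Prime 3) := ⟨Nat.prime_three⟩
  obtain ⟨a, ha⟩ := exists_prime_orderOf_dvd_card' (G := ↥P) 2 (dvd_trans ⟨3, rfl⟩ h6)
  obtain ⟨b, hb⟩ := exists_prime_orderOf_dvd_card' (G := ↥P) 3 (dvd_trans ⟨2, by norm_num⟩ h6)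
  have hab : orderOf (a * b) = 6 := by
    rw [(hc a b).orderOf_mul_eq_mul_orderOf_of_coprime (by rw [ha, hb]; norm_num), ha, hb]
  have hab' : orderOf ((a * b : ↥P) : A4) = 6 := by
    rw [Subgroup.orderOf_coe, hab]
  rcases A4_two_or_three ((a * b : ↥P) : A4) with h | h
  · have := orderOf_dvd_of_pow_eq_one h; rw [hab'] at this; norm_num at this
  · have := orderOf_dvd_of_pow_eq_one h; rw [hab'] at this; norm_num at this

private lemma le_four {n : ℕ} (h : n ∣ 12) (h6 : ¬ 6 ∣ n) : n ≤ 4 := by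
  have h12 : n ≤ 12 := Nat.le_of_dvd (by norm_num) h
  interval_cases n <;> revert h h6 <;> decide

private lemma equiv_three (R : Subgroup A4) (h : Nat.card R = 3) :
    Nonempty (↥R ≃* Multiplicative (ZMod 3)) := by
  haveI : Fact (Nat.Prime 3) := ⟨Nat.prime_three⟩
  have hc : IsCyclic ↥R := isCyclic_of_prime_card h
  have : Nonempty (Multiplicative (ZMod (Nat.card ↥R)) ≃* ↥R) := ⟨zmodCyclicMulEquiv hc⟩
  rw [h] at this
  exact this.elim fun e => ⟨e.symm⟩

private lemma equiv_klein (V : Subgroup A4) (h4 : Nat.card V = 4) :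
    Nonempty (↥V ≃* Multiplicative (ZMod 2) × Multiplicative (ZMod 2)) := by
  haveI : Finite ↥V := Subgroup.instFiniteSubtypeMem V
  have hsq : ∀ u : ↥V, u ^ 2 = 1 := by
    intro u
    rcases A4_two_or_three (u : A4) with h | h
    · exact Subtype.ext (by push_cast; exact h)
    · have h3 : u ^ 3 = 1 := Subtype.ext (by push_cast; exact h)
      have hd := orderOf_dvd_of_pow_eq_one h3
      have hd4 : orderOf u ∣ 4 := by
        have := orderOf_dvd_natCard u; rwa [h4] at this
      have h1 : orderOf u = 1 := Nat.dvd_one.mp (by simpa using Nat.dvd_gcd hd hd4)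
      have : u = 1 := orderOf_eq_one_iff.mp h1
      rw [this, one_pow]
  haveI : Nontrivial ↥V := by
    apply Finite.one_lt_card_iff_nontrivial.mp
    rw [h4]; norm_num
  haveI : IsKleinFour ↥V := by
    constructor
    · exact h4
    · have hdvd : Monoid.exponent ↥V ∣ 2 := Monoid.exponent_dvd_of_forall_pow_eq_one hsq
      have hlt : 1 < Monoid.exponent ↥V := Monoid.one_lt_exponent
      rcases (Nat.dvd_prime Nat.prime_two).mp hdvd with h | h
      · omega
      · exact h
  haveI : IsKleinFour (Multiplicative (ZMod 2) × Multiplicative (ZMod 2)) := by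
    constructor
    · rw [Nat.card_prod]
      have : Nat.card (Multiplicative (ZMod 2)) = 2 := by
        rw [Nat.card_eq_fintype_card]; rfl
      rw [this]
    · rw [Monoid.exponent_prod, Monoid.exponent_multiplicative, ZMod.exponent]
      norm_num
  exact ⟨IsKleinFour.nonempty_mulEquiv.some⟩

/-- If `Γ ≤ Υ` are subgroups of `A₄ × A₄` of orders `6` and `12` respectively, then `Υ` is
isomorphic to `(ℤ/2) × (ℤ/2) × (ℤ/3)` and is of product type: it equals the product of its
images under the two projections. -/
theorem A4_prod_A4_subgroup_order_twelve_over_six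
    (Γ Υ : Subgroup (A4 × A4)) (hΓ : Nat.card Γ = 6) (hΥ : Nat.card Υ = 12) (hle : Γ ≤ Υ) :
    Nonempty (Υ ≃* (Multiplicative (ZMod 2) × Multiplicative (ZMod 2) ×
      Multiplicative (ZMod 3))) ∧
    Υ = (Υ.map (MonoidHom.fst A4 A4)).prod (Υ.map (MonoidHom.snd A4 A4)) := by
  haveI : Fact (Nat.Prime 2) := ⟨Nat.prime_two⟩
  haveI : Fact (Nat.Prime 3) := ⟨Nat.prime_three⟩
  -- Step 1: an element of order 6 in Γ
  obtain ⟨g, hg⟩ := exists_prime_orderOf_dvd_card' (G := ↥Γ) 3 (by rw [hΓ]; norm_num)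
  obtain ⟨h, hh⟩ := exists_prime_orderOf_dvd_card' (G := ↥Γ) 2 (by rw [hΓ]; norm_num)
  -- the 3-Sylow of Γ, i.e. zpowers g, is normal
  have hidxg : (Subgroup.zpowers g).index = 2 := by
    have h1 := Subgroup.card_mul_index (Subgroup.zpowers g)
    rw [Nat.card_zpowers, hg, hΓ] at h1
    omega
  have hndg : ¬ (3 ∣ (Subgroup.zpowers g).index) := by rw [hidxg]; norm_num
  let T0 : Sylow 3 ↥Γ :=
    (IsPGroup.of_card (by rw [Nat.card_zpowers, hg, pow_one])).toSylow hndg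
  have hsylΓ : Nat.card (Sylow 3 ↥Γ) = 1 := by
    have hdvd : Nat.card (Sylow 3 ↥Γ) ∣ (T0 : Subgroup ↥Γ).index := Sylow.card_dvd_index T0
    have hmod : Nat.card (Sylow 3 ↥Γ) ≡ 1 [MOD 3] := card_sylow_modEq_one 3 ↥Γ
    have hT0 : (T0 : Subgroup ↥Γ) = Subgroup.zpowers g := rfl
    rw [hT0, hidxg] at hdvd
    rcases (Nat.dvd_prime Nat.prime_two).mp hdvd with h | h
    · exact h
    · rw [h] at hmod; simp [Nat.ModEq] at hmod
  haveI hssΓ : Subsingleton (Sylow 3 ↥Γ) := (Nat.card_eq_one_iff_unique.mp hsylΓ).1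
  have hnormΓ : (Subgroup.zpowers g).Normal := sylow_normal hssΓ T0
  have hconj : h * g * h⁻¹ = g :=
    conj_fix (sub_conj_inv Γ) hg (hnormΓ.conj_mem g (Subgroup.mem_zpowers g) h)
  have hcgh : Commute g h := by
    have : h * g = g * h := by
      conv_rhs => rw [← hconj]
      rw [inv_mul_cancel_right]
    exact this.symm
  have hz0 : orderOf (g * h) = 6 := by
    rw [hcgh.orderOf_mul_eq_mul_orderOf_of_coprime (by rw [hg, hh]; norm_num), hg, hh]
  set z : ↥Υ := ⟨((g * h : ↥Γ) : A4 × A4), hle (g * h).2⟩ with hzdef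
  have hz6 : orderOf z = 6 := by
    have e1 : orderOf ((g * h : ↥Γ) : A4 × A4) = 6 := by rw [Subgroup.orderOf_coe, hz0]
    have e2 : orderOf ((z : ↥Υ) : A4 × A4) = orderOf z := Subgroup.orderOf_coe z
    rw [← e2]
    exact e1
  -- Step 2: x of order 3, its Sylow is normal and central
  set x : ↥Υ := z ^ 2 with hxdef
  have hx3 : orderOf x = 3 := by rw [hxdef, orderOf_pow, hz6]; norm_num
  have hidxx : (Subgroup.zpowers x).index = 4 := by
    have h1 := Subgroup.card_mul_index (Subgroup.zpowers x)
    rw [Nat.card_zpowers, hx3, hΥ] at h1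
    omega
  let T : Sylow 3 ↥Υ :=
    (IsPGroup.of_card (by rw [Nat.card_zpowers, hx3, pow_one])).toSylow
      (by rw [hidxx]; norm_num)
  have hTcoe : (T : Subgroup ↥Υ) = Subgroup.zpowers x := rfl
  have hczx : Commute z x := (Commute.refl z).pow_right 2
  have hfix : ∀ w ∈ Subgroup.zpowers x, z * w * z⁻¹ = w := by
    rintro _ ⟨k, rfl⟩
    show z * x ^ k * z⁻¹ = x ^ k
    rw [(hczx.zpow_right k).eq, mul_inv_cancel_right]
  have hfix' : ∀ w ∈ Subgroup.zpowers x, z⁻¹ * w * z = w := by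
    rintro _ ⟨k, rfl⟩
    show z⁻¹ * x ^ k * z = x ^ k
    rw [(hczx.zpow_right k).inv_left.eq, inv_mul_cancel_right]
  have hzn : Subgroup.zpowers z ≤ Subgroup.normalizer (Subgroup.zpowers x : Set ↥Υ) := by
    rw [Subgroup.zpowers_le, Subgroup.mem_normalizer_iff]
    intro w
    constructor
    · intro hw; rw [hfix w hw]; exact hw
    · intro hw
      have h1 := hfix' _ hw
      have h2 : z⁻¹ * (z * w * z⁻¹) * z = w := by group
      rw [h2] at h1
      rw [h1]; exact hw
  have hidxz : (Subgroup.zpowers z).index = 2 := by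
    have h1 := Subgroup.card_mul_index (Subgroup.zpowers z)
    rw [Nat.card_zpowers, hz6, hΥ] at h1
    omega
  have hsylΥ : Nat.card (Sylow 3 ↥Υ) = 1 := by
    have hmod : Nat.card (Sylow 3 ↥Υ) ≡ 1 [MOD 3] := card_sylow_modEq_one 3 ↥Υ
    have hdvd : Nat.card (Sylow 3 ↥Υ) ∣ 2 := by
      rw [Sylow.card_eq_index_normalizer T, ← hidxz]
      exact Subgroup.index_dvd_of_le hzn
    rcases (Nat.dvd_prime Nat.prime_two).mp hdvd with h | h
    · exact h
    · rw [h] at hmod; simp [Nat.ModEq] at hmod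
  haveI hssΥ : Subsingleton (Sylow 3 ↥Υ) := (Nat.card_eq_one_iff_unique.mp hsylΥ).1
  have hnormΥ : (Subgroup.zpowers x).Normal := hTcoe ▸ sylow_normal hssΥ T
  have hxcen : ∀ y : ↥Υ, y * x * y⁻¹ = x := fun y =>
    conj_fix (sub_conj_inv Υ) hx3 (hnormΥ.conj_mem x (Subgroup.mem_zpowers x) y)
  have hxcomm : ∀ v : ↥Υ, Commute x v := by
    intro v
    have : v * x = x * v := by
      conv_rhs => rw [← hxcen v]
      rw [inv_mul_cancel_right]
    exact this.symm
  -- Step 3: all 3-torsion lies in zpowers x, hence is central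
  have h3tor : ∀ w : ↥Υ, w ^ 3 = 1 → w ∈ Subgroup.zpowers x := by
    intro w hw
    have hP : IsPGroup 3 (Subgroup.zpowers w) := by
      intro u
      refine ⟨1, ?_⟩
      have h3 : u ^ (3 : ℕ) = 1 := by
        obtain ⟨j, hj⟩ := u.2
        have hj' : (w : ↥Υ) ^ j = (u : ↥Υ) := hj
        apply Subtype.ext
        push_cast
        rw [← hj', ← zpow_natCast, ← zpow_mul, mul_comm, zpow_mul, zpow_natCast, hw, one_zpow]
      simpa using h3
    obtain ⟨Q, hQ⟩ := hP.exists_le_sylow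
    have hQT : Q = T := Subsingleton.elim _ _
    have := hQ (Subgroup.mem_zpowers w)
    rw [hQT] at this
    exact this
  have hcen3 : ∀ w : ↥Υ, w ^ 3 = 1 → ∀ v : ↥Υ, Commute w v := by
    intro w hw v
    obtain ⟨k, hk⟩ := h3tor w hw
    rw [← hk]
    exact (hxcomm v).zpow_left k
  -- Step 4: Υ is commutative
  have h6pow : ∀ w : ↥Υ, w ^ 6 = 1 := fun w =>
    Subtype.ext (by push_cast; exact G_pow_six (w : A4 × A4))
  have hall : ∀ u v : ↥Υ, Commute u v := by
    intro u v
    have h43 : ∀ w : ↥Υ, w ^ 4 * w ^ 3 = w := by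
      intro w
      rw [← pow_add, show (4 + 3 : ℕ) = 6 + 1 from rfl, pow_add, h6pow w, one_mul, pow_one]
    have hc4 : ∀ w v' : ↥Υ, Commute (w ^ 4) v' := by
      intro w v'
      refine hcen3 (w ^ 4) ?_ v'
      rw [← pow_mul, show (4 * 3 : ℕ) = 6 * 2 from rfl, pow_mul, h6pow w, one_pow]
    have hc33 : Commute (u ^ 3) (v ^ 3) := by
      have hu2 : ((u ^ 3 : ↥Υ) : A4 × A4) ^ 2 = 1 := by
        push_cast
        rw [← pow_mul, show (3 * 2 : ℕ) = 6 from rfl]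
        exact_mod_cast congrArg Subtype.val (h6pow u)
      have hv2 : ((v ^ 3 : ↥Υ) : A4 × A4) ^ 2 = 1 := by
        push_cast
        rw [← pow_mul, show (3 * 2 : ℕ) = 6 from rfl]
        exact_mod_cast congrArg Subtype.val (h6pow v)
      exact Subtype.ext (G_sq_comm _ _ hu2 hv2)
    have cu3v : Commute (u ^ 3) v := by
      have := (hc4 v (u ^ 3)).symm.mul_right hc33
      rwa [h43 v] at this
    have := (hc4 u v).mul_left cu3v
    rwa [h43 u] at this
  have hcommG : ∀ a ∈ Υ, ∀ b ∈ Υ, a * b = b * a := fun a ha b hb =>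
    congrArg Subtype.val (hall ⟨a, ha⟩ ⟨b, hb⟩)
  -- Step 5: the projections
  set P := Υ.map (MonoidHom.fst A4 A4) with hPdef
  set Q := Υ.map (MonoidHom.snd A4 A4) with hQdef
  have hPcomm : ∀ a b : ↥P, Commute a b := by
    rintro ⟨a, ha⟩ ⟨b, hb⟩
    rw [Subgroup.mem_map] at ha hb
    obtain ⟨u, hu, hua⟩ := ha
    obtain ⟨v, hv, hvb⟩ := hb
    apply Subtype.ext
    show a * b = b * a
    rw [← hua, ← hvb]
    exact congrArg Prod.fst (hcommG u hu v hv)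
  have hQcomm : ∀ a b : ↥Q, Commute a b := by
    rintro ⟨a, ha⟩ ⟨b, hb⟩
    rw [Subgroup.mem_map] at ha hb
    obtain ⟨u, hu, hua⟩ := ha
    obtain ⟨v, hv, hvb⟩ := hb
    apply Subtype.ext
    show a * b = b * a
    rw [← hua, ← hvb]
    exact congrArg Prod.snd (hcommG u hu v hv)
  have hPdvd : Nat.card P ∣ 12 := by
    have := Subgroup.card_subgroup_dvd_card P
    rwa [A4_card] at this
  have hQdvd : Nat.card Q ∣ 12 := by
    have := Subgroup.card_subgroup_dvd_card Q
    rwa [A4_card] at this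
  have hP4 : Nat.card P ≤ 4 := le_four hPdvd (no_six P hPcomm)
  have hQ4 : Nat.card Q ≤ 4 := le_four hQdvd (no_six Q hQcomm)
  have hleprod : Υ ≤ P.prod Q := by
    intro u hu
    exact Subgroup.mem_prod.mpr
      ⟨Subgroup.mem_map_of_mem _ hu, Subgroup.mem_map_of_mem _ hu⟩
  have hcardprod : Nat.card ↥(P.prod Q) = Nat.card P * Nat.card Q := by
    rw [Nat.card_congr (Subgroup.prodEquiv P Q).toEquiv, Nat.card_prod]
  have hdvd12 : 12 ∣ Nat.card P * Nat.card Q := by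
    rw [← hcardprod, ← hΥ]
    exact Subgroup.card_dvd_of_le hleprod
  have hPpos : 0 < Nat.card P := Nat.card_pos
  have hQpos : 0 < Nat.card Q := Nat.card_pos
  have hpq : Nat.card P * Nat.card Q = 12 := by
    obtain ⟨k, hk⟩ := hdvd12
    have h16 : Nat.card P * Nat.card Q ≤ 16 := Nat.mul_le_mul hP4 hQ4
    have hpos : 0 < Nat.card P * Nat.card Q := Nat.mul_pos hPpos hQpos
    omega
  have heq : Υ = P.prod Q :=
    Subgroup.eq_of_le_of_card_ge hleprod (by rw [hcardprod, hpq, hΥ])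
  refine ⟨?_, heq⟩
  have hcase : (Nat.card P = 3 ∧ Nat.card Q = 4) ∨ (Nat.card P = 4 ∧ Nat.card Q = 3) := by
    have h1 : 0 < Nat.card P := hPpos
    interval_cases h : Nat.card P <;> omega
  have e0 : ↥Υ ≃* ↥P × ↥Q := (MulEquiv.subgroupCongr heq).trans (Subgroup.prodEquiv P Q)
  rcases hcase with ⟨hp3, hq4⟩ | ⟨hp4, hq3⟩
  · obtain ⟨e1⟩ := equiv_three P hp3
    obtain ⟨e2⟩ := equiv_klein Q hq4
    exact ⟨((e0.trans (e1.prodCongr e2)).trans MulEquiv.prodComm).trans MulEquiv.prodAssoc⟩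
  · obtain ⟨e1⟩ := equiv_klein P hp4
    obtain ⟨e2⟩ := equiv_three Q hq3
    exact ⟨(e0.trans (e1.prodCongr e2)).trans MulEquiv.prodAssoc⟩
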